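/- arXiv:1312.5518 — 2 statements merged into one kernel-verified Lean document; each statement's English description precedes it below -/
import Mathlib

section
/- Let S be a semigroup that is the disjoint union of free monogenic subsemigroups ⟨a⟩, ⟨b⟩, ⟨c⟩. Then at least one of ⟨a⟩∪⟨b⟩, ⟨a⟩∪⟨c⟩, ⟨b⟩∪⟨c⟩ is a subsemigroup of S. -/
/-- `pw a n` is `a ^ n` for `n ≥ 1` (with junk value `a` at `n = 0`),
defined in any magma. -/
def pw {S : Type*} [Mul S] (a : S) : ℕ → S
  | 0 => a
  | 1 => a
  | n + 2 => pw a (n + 1) * a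

/-- The monogenic subsemigroup `⟨a⟩ = {a^n : n ≥ 1}`. -/
def genSet {S : Type*} [Mul S] (a : S) : Set S := {x | ∃ n, 1 ≤ n ∧ pw a n = x}

/-- `a` has infinite order: its positive powers are pairwise distinct,
i.e. `⟨a⟩` is free monogenic. -/
def InfOrder {S : Type*} [Mul S] (a : S) : Prop :=
  ∀ m n : ℕ, 1 ≤ m → 1 ≤ n → pw a m = pw a n → m = n

/-- A union of two of the three monogenic pieces is closed under multiplication. -/
def IsClosed2 {S : Type*} [Semigroup S] (x y : S) : Prop :=
  ∀ u ∈ genSet x ∪ genSet y, ∀ v ∈ genSet x ∪ genSet y, u * v ∈ genSet x ∪ genSet y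

/-!
If `⟨x⟩ ∪ ⟨y⟩` is not closed, then already `x * y` or `y * x` falls into the third piece `⟨z⟩`:
once `x * y` lies in `⟨x⟩` (resp. `⟨y⟩`), it absorbs every product `x^m * y^n`. So if none of the
three unions were closed, each pair of generators would have a product in the third piece, and
some choice of orientations yields `x * y ∈ ⟨z⟩` and `y * z ∈ ⟨x⟩`. Then `x * y * z` lies in
`⟨z⟩` and, by associativity, in `⟨x⟩`, contradicting disjointness.
-/

open Subsemigroup

namespace Subsemigroup

variable {M : Type*} [Semigroup M] {s : Set M} {u v : M}

theorem mul_mem_of_right_mem_closure {A : Subsemigroup M} (hs : ∀ u ∈ A, ∀ y ∈ s, u * y ∈ A)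
    (hv : v ∈ closure s) (hu : u ∈ A) : u * v ∈ A := by
  induction hv using closure_induction generalizing u with
  | mem y hy => exact hs u hu y hy
  | mul v w _ _ hv hw => rw [← mul_assoc]; exact hw (hv hu)

theorem mul_mem_of_left_mem_closure {A : Subsemigroup M} (hs : ∀ x ∈ s, ∀ v ∈ A, x * v ∈ A)
    (hu : u ∈ closure s) (hv : v ∈ A) : u * v ∈ A := by
  induction hu using closure_induction generalizing v with
  | mem x hx => exact hs x hx v hv
  | mul u w _ _ hu hw => rw [mul_assoc]; exact hu (hw hv)

theorem mul_mem_closure_of_left_mem_closure {y : M} (hs : ∀ x ∈ s, x * y ∈ closure s)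
    (hu : u ∈ closure s) : u * y ∈ closure s := by
  induction hu using closure_induction with
  | mem x hx => exact hs x hx
  | mul u w hu _ _ hw => rw [mul_assoc]; exact mul_mem hu hw

theorem mul_mem_closure_of_right_mem_closure {x : M} (hs : ∀ y ∈ s, x * y ∈ closure s)
    (hv : v ∈ closure s) : x * v ∈ closure s := by
  induction hv using closure_induction with
  | mem y hy => exact hs y hy
  | mul v w _ hw hv _ => rw [← mul_assoc]; exact mul_mem hv hw

theorem mul_mem_closure_singleton_left {x y : M} (h : x * y ∈ closure {x})
    (hu : u ∈ closure {x}) (hv : v ∈ closure {y}) : u * v ∈ closure {x} :=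
  mul_mem_of_right_mem_closure (by
    rintro _ hu' _ rfl
    exact mul_mem_closure_of_left_mem_closure (by rintro _ rfl; exact h) hu') hv hu

theorem mul_mem_closure_singleton_right {x y : M} (h : x * y ∈ closure {y})
    (hu : u ∈ closure {x}) (hv : v ∈ closure {y}) : u * v ∈ closure {y} :=
  mul_mem_of_left_mem_closure (by
    rintro _ rfl _ hv'
    exact mul_mem_closure_of_right_mem_closure (by rintro _ rfl; exact h) hv') hu hv

end Subsemigroup

section
variable {S : Type*} [Semigroup S]

theorem pw_succ (a : S) {n : ℕ} (hn : 1 ≤ n) : pw a (n + 1) = pw a n * a := by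
  obtain ⟨n, rfl⟩ := Nat.exists_eq_add_of_le' hn
  rfl

theorem pw_mul_pw (a : S) {m : ℕ} (hm : 1 ≤ m) : ∀ n, 1 ≤ n → pw a m * pw a n = pw a (m + n)
  | 1, _ => (pw_succ a hm).symm
  | n + 2, _ => by
    rw [pw_succ a (by omega : 1 ≤ n + 1), ← mul_assoc, pw_mul_pw a hm (n + 1) (by omega),
      ← pw_succ a (by omega)]
    rfl

theorem pw_mem_closure (a : S) : ∀ n, pw a n ∈ closure {a}
  | 0 | 1 => subset_closure rfl
  | n + 2 => mul_mem (pw_mem_closure a (n + 1)) (subset_closure rfl)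

theorem genSet_eq_closure (a : S) : genSet a = closure {a} := by
  ext x
  constructor
  · rintro ⟨n, -, rfl⟩
    exact pw_mem_closure a n
  · intro hx
    induction hx using closure_induction with
    | mem x hx => exact ⟨1, le_rfl, hx.symm⟩
    | mul _ _ _ _ hx hy =>
      obtain ⟨m, hm, rfl⟩ := hx
      obtain ⟨n, hn, rfl⟩ := hy
      exact ⟨m + n, by omega, (pw_mul_pw a hm n hn).symm⟩

theorem mul_mem_genSet_union {x y u v : S} (h : x * y ∈ genSet x ∪ genSet y)
    (hu : u ∈ genSet x) (hv : v ∈ genSet y) : u * v ∈ genSet x ∪ genSet y := by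
  simp only [genSet_eq_closure] at *
  rcases h with h | h
  · exact Or.inl (mul_mem_closure_singleton_left h hu hv)
  · exact Or.inr (mul_mem_closure_singleton_right h hu hv)

theorem isClosed2_of_mul_mem {x y : S} (hxy : x * y ∈ genSet x ∪ genSet y)
    (hyx : y * x ∈ genSet x ∪ genSet y) : IsClosed2 x y := by
  rw [Set.union_comm] at hyx
  rintro u (hu | hu) v (hv | hv)
  · simp only [genSet_eq_closure] at *
    exact Or.inl (mul_mem hu hv)
  · exact mul_mem_genSet_union hxy hu hv
  · rw [Set.union_comm]
    exact mul_mem_genSet_union hyx hu hv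
  · simp only [genSet_eq_closure] at *
    exact Or.inr (mul_mem hu hv)

theorem mul_mem_of_not_isClosed2 {x y z : S}
    (hcover : genSet x ∪ genSet y ∪ genSet z = Set.univ) (h : ¬IsClosed2 x y) :
    x * y ∈ genSet z ∨ y * x ∈ genSet z := by
  have hmem : ∀ w, w ∈ genSet x ∪ genSet y ∪ genSet z := fun w ↦ hcover ▸ Set.mem_univ w
  by_contra! hnot
  exact h (isClosed2_of_mul_mem ((hmem _).resolve_right hnot.1) ((hmem _).resolve_right hnot.2))

theorem mul_mul_mem_genSet_inter {x y z : S} (hxy : x * y ∈ genSet z) (hyz : y * z ∈ genSet x) :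
    x * y * z ∈ genSet x ∩ genSet z := by
  simp only [genSet_eq_closure] at *
  exact ⟨mul_assoc x y z ▸ mul_mem (subset_closure rfl) hyz, mul_mem hxy (subset_closure rfl)⟩

end

theorem stmt_4_general {S : Type*} [Semigroup S] (a b c : S)
    (hab : genSet a ∩ genSet b = ∅) (hac : genSet a ∩ genSet c = ∅)
    (hbc : genSet b ∩ genSet c = ∅)
    (hcover : genSet a ∪ genSet b ∪ genSet c = Set.univ) :
    IsClosed2 a b ∨ IsClosed2 a c ∨ IsClosed2 b c := by
  by_contra! ⟨nab, nac, nbc⟩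
  have hba : genSet b ∩ genSet a = ∅ := by rwa [Set.inter_comm]
  have hca : genSet c ∩ genSet a = ∅ := by rwa [Set.inter_comm]
  have hcb : genSet c ∩ genSet b = ∅ := by rwa [Set.inter_comm]
  have pab := mul_mem_of_not_isClosed2 hcover nab
  have pac := mul_mem_of_not_isClosed2 (z := b) (by rw [← hcover]; ac_rfl) nac
  have pbc := mul_mem_of_not_isClosed2 (z := a) (by rw [← hcover]; ac_rfl) nbc
  rcases pab with hab' | hba'
  · rcases pbc with hbc' | hcb'
    · exact hac.subset (mul_mul_mem_genSet_inter hab' hbc')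
    · rcases pac with hac' | hca'
      · exact hab.subset (mul_mul_mem_genSet_inter hac' hcb')
      · exact hcb.subset (mul_mul_mem_genSet_inter hca' hab')
  · rcases pac with hac' | hca'
    · exact hbc.subset (mul_mul_mem_genSet_inter hba' hac')
    · rcases pbc with hbc' | hcb'
      · exact hba.subset (mul_mul_mem_genSet_inter hbc' hca')
      · exact hca.subset (mul_mul_mem_genSet_inter hcb' hba')

/-- If a semigroup is the disjoint union of free monogenic subsemigroups
⟨a⟩, ⟨b⟩, ⟨c⟩, then one of ⟨a⟩∪⟨b⟩, ⟨a⟩∪⟨c⟩, ⟨b⟩∪⟨c⟩ is a subsemigroup. -/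
theorem stmt_4 {S : Type*} [Semigroup S] (a b c : S)
    (ha : InfOrder a) (hb : InfOrder b) (hc : InfOrder c)
    (hab : genSet a ∩ genSet b = ∅) (hac : genSet a ∩ genSet c = ∅)
    (hbc : genSet b ∩ genSet c = ∅)
    (hcover : genSet a ∪ genSet b ∪ genSet c = Set.univ) :
    IsClosed2 a b ∨ IsClosed2 a c ∨ IsClosed2 b c :=
  stmt_4_general a b c hab hac hbc hcover
end

section
/- The semigroup defined by the presentation ⟨a, b | ab = ba = a^m⟩, for any m ≥ 1, is the disjoint union of the free monogenic subsemigroups ⟨a⟩ and ⟨b⟩ (both infinite and disjoint, with union the whole semigroup). -/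
section Powers

variable {S T M : Type*}

theorem map_pw [Mul S] [Mul T] (f : S →ₙ* T) (a : S) : ∀ n, f (pw a n) = pw (f a) n
  | 0 | 1 => rfl
  | n + 2 => by rw [pw, pw, map_mul, map_pw f a (n + 1)]

theorem pw_pred_succ [Mul S] (a : S) : ∀ n, pw a (n - 1 + 1) = pw a n
  | 0 | _ + 1 => rfl

theorem pw_eq_pow [Monoid M] (a : M) : ∀ {n}, 0 < n → pw a n = a ^ n
  | 1, _ => (pow_one a).symm
  | n + 2, _ => by rw [pw, pw_eq_pow a n.succ_pos, ← pow_succ]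

theorem WithOne.coe_pw [Semigroup S] (a : S) {n : ℕ} (hn : 0 < n) :
    ((pw a n : S) : WithOne S) = (a : WithOne S) ^ n := by
  rw [← pw_eq_pow _ hn]
  exact map_pw WithOne.coeMulHom a n

theorem mem_genSet_iff_coe_eq_pow [Semigroup S] {a x : S} :
    x ∈ genSet a ↔ ∃ n, (x : WithOne S) = (a : WithOne S) ^ (n + 1) := by
  refine ⟨fun ⟨n, hn, hx⟩ => ⟨n - 1, ?_⟩, fun ⟨n, hx⟩ => ⟨n + 1, n.succ_pos, ?_⟩⟩
  · rw [← hx, Nat.sub_add_cancel hn, WithOne.coe_pw a hn]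
  · rwa [← WithOne.coe_inj, WithOne.coe_pw a n.succ_pos, eq_comm]

theorem InfOrder.of_mulHom [Mul S] [Monoid M] (f : S →ₙ* M) {a : S}
    (hf : Function.Injective (f a ^ ·)) : InfOrder a := by
  intro i j hi hj hij
  apply hf
  simpa only [map_pw, pw_eq_pow _ hi, pw_eq_pow _ hj] using congrArg f hij

theorem genSet_inter_genSet_eq_empty_of_mulHom [Mul S] [MonoidWithZero M] [NoZeroDivisors M]
    (f : S →ₙ* M) {a b : S} (ha : f a = 0) (hb : f b ≠ 0) : genSet a ∩ genSet b = ∅ := by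
  refine Set.eq_empty_of_forall_notMem fun x ⟨⟨i, hi, hax⟩, ⟨j, hj, hbx⟩⟩ => ?_
  have hfx := congrArg f (hax.trans hbx.symm)
  rw [map_pw, map_pw, pw_eq_pow _ hi, pw_eq_pow _ hj, ha, zero_pow (Nat.pos_iff_ne_zero.1 hi)]
    at hfx
  exact pow_ne_zero j hb hfx.symm

end Powers

section PowRelations

variable {M : Type*} [Monoid M] {a b : M} {k : ℕ}

theorem pow_succ_mul_eq_of_mul_eq (hab : a * b = a ^ (k + 1)) (i : ℕ) :
    a ^ (i + 1) * b = a ^ (i + k + 1) := by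
  rw [pow_succ, mul_assoc, hab, ← pow_add, add_assoc]

theorem mul_pow_succ_eq_of_mul_eq (hba : b * a = a ^ (k + 1)) (i : ℕ) :
    b * a ^ (i + 1) = a ^ (i + k + 1) := by
  rw [pow_succ', ← mul_assoc, hba, ← pow_add, add_comm, ← add_assoc]

theorem mul_pow_eq_of_mul_eq (hab : a * b = a ^ (k + 1)) :
    ∀ j, a * b ^ j = a ^ (j * k + 1)
  | 0 => by simp
  | j + 1 => by
    rw [pow_succ, ← mul_assoc, mul_pow_eq_of_mul_eq hab j, pow_succ_mul_eq_of_mul_eq hab,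
      Nat.succ_mul]

end PowRelations

namespace Stmt7

/-- The generator `a` in the free semigroup on two letters. -/
def A : FreeSemigroup (Fin 2) := FreeSemigroup.of 0

/-- The generator `b` in the free semigroup on two letters. -/
def B : FreeSemigroup (Fin 2) := FreeSemigroup.of 1

/-- The relations `ab = a^m` and `ba = a^m` (i.e. `ab = ba = a^m`). -/
def rel (m : ℕ) : FreeSemigroup (Fin 2) → FreeSemigroup (Fin 2) → Prop := fun u v =>
  (u = A * B ∧ v = pw A m) ∨ (u = B * A ∧ v = pw A m)

/-- The semigroup defined by the presentation `⟨a, b | ab = ba = a^m⟩`. -/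
def Sem (m : ℕ) := (conGen (rel m)).Quotient

instance (m : ℕ) : Semigroup (Sem m) :=
  inferInstanceAs (Semigroup (conGen (rel m)).Quotient)

/-- The image of `a` in the presented semigroup. -/
def a' (m : ℕ) : Sem m := (A : (conGen (rel m)).Quotient)

/-- The image of `b` in the presented semigroup. -/
def b' (m : ℕ) : Sem m := (B : (conGen (rel m)).Quotient)

variable {m : ℕ}

theorem a'_mul_b' : a' m * b' m = pw (a' m) m :=
  (Con.eq _ |>.2 <| ConGen.Rel.of _ _ <| .inl ⟨rfl, rfl⟩).trans
    (map_pw (conGen (rel m)).mkMulHom A m)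

theorem b'_mul_a' : b' m * a' m = pw (a' m) m :=
  (Con.eq _ |>.2 <| ConGen.Rel.of _ _ <| .inr ⟨rfl, rfl⟩).trans
    (map_pw (conGen (rel m)).mkMulHom A m)

def Sem.lift {T : Type*} [Semigroup T] (x y : T) (hxy : x * y = pw x m) (hyx : y * x = pw x m) :
    Sem m →ₙ* T where
  toFun q := Con.liftOn q (FreeSemigroup.lift ![x, y]) fun _ _ h =>
    (Con.conGen_le (c := Con.ker (FreeSemigroup.lift ![x, y]))).2 (by
      rintro _ _ (⟨rfl, rfl⟩ | ⟨rfl, rfl⟩) <;>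
        simp [Con.ker_rel, map_pw, A, B, hxy, hyx]) h
  map_mul' := by rintro ⟨u⟩ ⟨v⟩; exact map_mul _ u v

theorem Sem.induction_on {p : Sem m → Prop} (x : Sem m) (ha : p (a' m)) (hb : p (b' m))
    (ha_mul : ∀ x, p x → p (a' m * x)) (hb_mul : ∀ x, p x → p (b' m * x)) : p x := by
  induction x using Con.induction_on with | _ w =>
  induction w using FreeSemigroup.recOnMul with
  | ih1 i => fin_cases i; exacts [ha, hb]
  | ih2 i w _ ih => fin_cases i; exacts [ha_mul _ ih, hb_mul _ ih]

-- As `pw x 0 = x`, for every `m` the relations read `ab = ba = a ^ (m - 1 + 1)`.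
theorem coe_a'_mul_b' :
    (a' m : WithOne (Sem m)) * b' m = (a' m : WithOne (Sem m)) ^ (m - 1 + 1) := by
  rw [← WithOne.coe_mul, a'_mul_b', ← pw_pred_succ, WithOne.coe_pw _ (m - 1).succ_pos]

theorem coe_b'_mul_a' :
    (b' m : WithOne (Sem m)) * a' m = (a' m : WithOne (Sem m)) ^ (m - 1 + 1) := by
  rw [← WithOne.coe_mul, b'_mul_a', ← pw_pred_succ, WithOne.coe_pw _ (m - 1).succ_pos]

theorem genSet_union_genSet_eq_univ : genSet (a' m) ∪ genSet (b' m) = Set.univ := by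
  refine Set.eq_univ_of_forall fun x => Sem.induction_on x ?_ ?_ ?_ ?_ <;>
    simp only [Set.mem_union, mem_genSet_iff_coe_eq_pow, WithOne.coe_mul]
  · exact .inl ⟨0, (pow_one _).symm⟩
  · exact .inr ⟨0, (pow_one _).symm⟩
  · rintro x (⟨n, hx⟩ | ⟨n, hx⟩) <;> rw [hx] <;> left
    · exact ⟨n + 1, (pow_succ' _ _).symm⟩
    · exact ⟨(n + 1) * (m - 1), mul_pow_eq_of_mul_eq coe_a'_mul_b' (n + 1)⟩
  · rintro x (⟨n, hx⟩ | ⟨n, hx⟩) <;> rw [hx]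
    · exact .inl ⟨n + (m - 1), mul_pow_succ_eq_of_mul_eq coe_b'_mul_a' n⟩
    · exact .inr ⟨n + 1, (pow_succ' _ _).symm⟩

theorem stmt_7_general (m : ℕ) :
    InfOrder (a' m) ∧ InfOrder (b' m) ∧
      genSet (a' m) ∩ genSet (b' m) = ∅ ∧
      genSet (a' m) ∪ genSet (b' m) = Set.univ := by
  have two_mul : 2 * 2 ^ (m - 1) = pw 2 m := by
    rw [← pw_pred_succ, pw_eq_pow _ (m - 1).succ_pos, pow_succ']
  have zero_mul_two : 0 * 2 = pw 0 m := by
    rw [← pw_pred_succ, pw_eq_pow _ (m - 1).succ_pos, zero_pow (m - 1).succ_ne_zero, zero_mul]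
  let weight : Sem m →ₙ* ℕ := Sem.lift 2 (2 ^ (m - 1)) two_mul ((mul_comm _ _).trans two_mul)
  let bDegree : Sem m →ₙ* ℕ := Sem.lift 0 2 zero_mul_two ((mul_zero 2).trans zero_mul_two)
  exact ⟨.of_mulHom weight (Nat.pow_right_injective le_rfl),
    .of_mulHom bDegree (Nat.pow_right_injective le_rfl),
    genSet_inter_genSet_eq_empty_of_mulHom bDegree rfl two_ne_zero,
    genSet_union_genSet_eq_univ⟩

/-- The semigroup `⟨a, b | ab = ba = a^m⟩` (for `m ≥ 1`) is the disjoint union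
of the free monogenic subsemigroups `⟨a⟩` and `⟨b⟩`. -/
theorem stmt_7 (m : ℕ) (hm : 1 ≤ m) :
    InfOrder (a' m) ∧ InfOrder (b' m) ∧
      genSet (a' m) ∩ genSet (b' m) = ∅ ∧
      genSet (a' m) ∪ genSet (b' m) = Set.univ :=
  stmt_7_general m

end Stmt7
end
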